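/- Helstrom limit for channel position finding with depolarizing channels and pure unentangled inputs: Let d ≥ 2 and let φ be any rank-one orthogonal projection (pure state) on ℂ^d. For q ∈ [0,1] set τ_q = q·(1/d)·I_d + (1−q)·φ, a density matrix on ℂ^d. Let m ≥ 2 and q_B, q_T ∈ [0,1], and for n = 0,…,m−1 define ρ_n = τ_{c_0} ⊗ τ_{c_1} ⊗ … ⊗ τ_{c_{m−1}} on (ℂ^d)^{⊗m}, where c_n = q_T and c_k = q_B for k ≠ n. Then for every u ≥ 1, the Helstrom error probability of the equiprobable states (ρ_n^{⊗u})_{n=0}^{m−1} equals h_m^u((1 − d^{−1})·q_B, (1 − d^{−1})·q_T). -/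

import Mathlib

/-!
Write the pure state as `φ = U |i0⟩⟨i0| U*`. Every depolarized state `c • I/d + (1 - c) • φ` is
then `U D U*` with `D` diagonal, so all hypotheses `ρₙ^{⊗u}` are diagonalized by the single unitary
`(U^{⊗m})^{⊗u}` and the problem becomes classical: the optimal measurement is maximum likelihood,
with success probability `(1/m) ∑ⱼ maxₙ rₙ(j)`. The likelihoods `rₙ(j)` only depend on which
coordinates of `j` differ from `i0`; grouping the `j` by this Boolean pattern turns the problem
into locating, among `m` blocks of `u` independent Bernoulli bits, the one block with parameter
`(1 - 1/d) q_T`, all others having parameter `(1 - 1/d) q_B`. An exchange argument shows that the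
maximum-likelihood guess is the block of largest Hamming weight if `q_B ≤ q_T` and of smallest
weight otherwise, which yields `h_m^u`.
-/

open Matrix BigOperators Finset ComplexOrder

noncomputable section

/-- A density matrix: positive semidefinite with unit trace. -/
def IsDensityMatrix {ι : Type*} [Fintype ι] (ρ : Matrix ι ι ℂ) : Prop :=
  ρ.PosSemidef ∧ ρ.trace = 1

/-- The Helstrom minimum error probability for discriminating the states `ρ n`
with prior probabilities `p n`, optimized over all POVMs. -/
def helstrom {ι : Type*} [Fintype ι] [DecidableEq ι] {m : ℕ}
    (ρ : Fin m → Matrix ι ι ℂ) (p : Fin m → ℝ) : ℝ :=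
  1 - sSup { x : ℝ | ∃ M : Fin m → Matrix ι ι ℂ,
      (∀ n, (M n).PosSemidef) ∧ (∑ n, M n) = 1 ∧
      x = ∑ n, p n * ((M n * ρ n).trace).re }

open Classical in
/-- The positive semidefinite square root (junk value `0` off the PSD cone). -/
def psdSqrt {ι : Type*} [Fintype ι] [DecidableEq ι] (A : Matrix ι ι ℂ) : Matrix ι ι ℂ :=
  if h : A.PosSemidef then
    (h.1.eigenvectorUnitary : Matrix ι ι ℂ) * diagonal ((↑) ∘ (√·) ∘ h.1.eigenvalues) *
      (star h.1.eigenvectorUnitary : Matrix ι ι ℂ)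
  else 0

/-- The trace norm `‖A‖₁ = tr √(Aᴴ A)`. -/
def traceNorm {ι : Type*} [Fintype ι] [DecidableEq ι] (A : Matrix ι ι ℂ) : ℝ :=
  ((psdSqrt (Aᴴ * A)).trace).re

/-- The `u`-fold Kronecker (tensor) power of a square matrix. -/
def tensorPow {ι : Type*} (σ : Matrix ι ι ℂ) (u : ℕ) :
    Matrix (Fin u → ι) (Fin u → ι) ℂ :=
  fun i j => ∏ k, σ (i k) (j k)

/-- Tensor product of a family of `m` square matrices. -/
def tensorFam {m : ℕ} {ι : Type*} (σ : Fin m → Matrix ι ι ℂ) :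
    Matrix (Fin m → ι) (Fin m → ι) ℂ :=
  fun i j => ∏ k, σ k (i k) (j k)

/-- Hamming weight of a Boolean string. -/
def hamming {u : ℕ} (x : Fin u → Bool) : ℕ :=
  (Finset.univ.filter fun k => x k = true).card

open Classical in
/-- The channel-position-finding error function `h_m^u(qB,qT)`. -/
def hErr (m u : ℕ) (qB qT : ℝ) : ℝ :=
  1 - (1/(m:ℝ)) * ∑ x : Fin m → Fin u → Bool,
    (let w : Fin m → ℕ := fun ℓ => hamming (x ℓ)
     let W : ℕ := ∑ ℓ, w ℓ
     let ws : ℕ := if qB ≤ qT then Finset.univ.sup w else sInf (Set.range w)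
     qT^ws * (1-qT)^(u-ws) * (qB^(W-ws) * (1-qB)^((m-1)*u-(W-ws))))

section TensorFam

variable {m : ℕ} {ι : Type*}

lemma tensorFam_mul [Fintype ι] (A B : Fin m → Matrix ι ι ℂ) :
    tensorFam (fun k => A k * B k) = tensorFam A * tensorFam B := by
  ext i j
  simp only [tensorFam, mul_apply, prod_univ_sum, Fintype.piFinset_univ]
  exact sum_congr rfl fun x _ => prod_mul_distrib

lemma star_tensorFam (A : Fin m → Matrix ι ι ℂ) :
    star (tensorFam A) = tensorFam (fun k => star (A k)) := by
  ext i j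
  simp [tensorFam]

lemma tensorFam_diagonal [DecidableEq ι] (g : Fin m → ι → ℂ) :
    tensorFam (fun k => diagonal (g k)) = diagonal (fun j => ∏ k, g k (j k)) := by
  ext i j
  by_cases h : i = j
  · subst h; simp [tensorFam]
  · obtain ⟨k, hk⟩ := Function.ne_iff.mp h
    simp only [tensorFam, diagonal_apply_ne _ h]
    exact prod_eq_zero (mem_univ k) (diagonal_apply_ne _ hk)

lemma tensorFam_one [DecidableEq ι] : tensorFam (fun _ : Fin m => (1 : Matrix ι ι ℂ)) = 1 := by
  simpa using tensorFam_diagonal (m := m) (fun _ _ => (1 : ℂ))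

lemma tensorFam_mem_unitaryGroup [Fintype ι] [DecidableEq ι] {U : Fin m → Matrix ι ι ℂ}
    (hU : ∀ k, U k ∈ unitaryGroup ι ℂ) : tensorFam U ∈ unitaryGroup (Fin m → ι) ℂ := by
  rw [mem_unitaryGroup_iff, star_tensorFam, ← tensorFam_mul]
  simp_rw [mem_unitaryGroup_iff.mp (hU _)]
  exact tensorFam_one

lemma tensorFam_conj [Fintype ι] (U D : Fin m → Matrix ι ι ℂ) :
    tensorFam (fun k => U k * D k * star (U k)) =
      tensorFam U * tensorFam D * star (tensorFam U) := by
  rw [tensorFam_mul, tensorFam_mul, star_tensorFam]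

end TensorFam

lemma re_diag_nonneg_of_posSemidef {ι : Type*} {M : Matrix ι ι ℂ} (hM : M.PosSemidef) (x : ι) :
    0 ≤ (M x x).re :=
  (Complex.nonneg_iff.mp (hM.diag_nonneg (i := x))).1

section Helstrom

variable {ι : Type*} [Fintype ι] [DecidableEq ι] {m : ℕ}

def successProbs (ρ : Fin m → Matrix ι ι ℂ) (p : Fin m → ℝ) : Set ℝ :=
  { x | ∃ M : Fin m → Matrix ι ι ℂ, (∀ n, (M n).PosSemidef) ∧ (∑ n, M n) = 1 ∧
      x = ∑ n, p n * ((M n * ρ n).trace).re }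

lemma helstrom_eq_one_sub_sSup (ρ : Fin m → Matrix ι ι ℂ) (p : Fin m → ℝ) :
    helstrom ρ p = 1 - sSup (successProbs ρ p) := rfl

lemma successProbs_subset_conj {U : Matrix ι ι ℂ} (hU : U ∈ unitaryGroup ι ℂ)
    (ρ : Fin m → Matrix ι ι ℂ) (p : Fin m → ℝ) :
    successProbs ρ p ⊆ successProbs (fun n => U * ρ n * star U) p := by
  rintro x ⟨M, hM, hsum, rfl⟩
  have hUU : star U * U = 1 := mem_unitaryGroup_iff'.mp hU
  refine ⟨fun n => U * M n * star U, fun n => ?_, ?_, ?_⟩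
  · simpa [star_eq_conjTranspose] using (hM n).mul_mul_conjTranspose_same U
  · rw [← sum_mul, ← mul_sum, hsum, mul_one, mem_unitaryGroup_iff.mp hU]
  · refine sum_congr rfl fun n _ => ?_
    have hconj : U * M n * star U * (U * ρ n * star U) = U * (M n * ρ n) * star U := by
      simp only [Matrix.mul_assoc]
      rw [← Matrix.mul_assoc (star U) U, hUU, Matrix.one_mul]
    rw [hconj, trace_mul_cycle, hUU, Matrix.one_mul]

lemma helstrom_unitary_conj {U : Matrix ι ι ℂ} (hU : U ∈ unitaryGroup ι ℂ)
    (ρ : Fin m → Matrix ι ι ℂ) (p : Fin m → ℝ) :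
    helstrom (fun n => U * ρ n * star U) p = helstrom ρ p := by
  have hback : successProbs (fun n => U * ρ n * star U) p ⊆ successProbs ρ p := by
    convert successProbs_subset_conj (Unitary.star_mem hU) (fun n => U * ρ n * star U) p
    have hUU : star U * U = 1 := mem_unitaryGroup_iff'.mp hU
    rw [star_star, ← Matrix.mul_assoc, ← Matrix.mul_assoc, hUU, Matrix.one_mul,
      Matrix.mul_assoc, hUU, Matrix.mul_one]
  rw [helstrom_eq_one_sub_sSup, helstrom_eq_one_sub_sSup,
    hback.antisymm (successProbs_subset_conj hU ρ p)]

lemma trace_mul_diagonal_re (M : Matrix ι ι ℂ) (r : ι → ℝ) :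
    ((M * diagonal (fun x => (r x : ℂ))).trace).re = ∑ x, (M x x).re * r x := by
  simp [trace, mul_diagonal, Complex.re_sum]

lemma helstrom_diagonal [NeZero m] (r : Fin m → ι → ℝ) (p : Fin m → ℝ) :
    helstrom (fun n => diagonal (fun x => (r n x : ℂ))) p =
      1 - ∑ x, ⨆ n, p n * r n x := by
  rw [helstrom_eq_one_sub_sSup]
  congr 1
  refine IsGreatest.csSup_eq ⟨?_, ?_⟩
  · choose best hbest using fun x => exists_eq_ciSup_of_finite (f := fun n => p n * r n x)
    refine ⟨fun n => diagonal (fun x => if best x = n then 1 else 0),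
      fun n => PosSemidef.diagonal fun x => by split_ifs <;> simp, ?_, ?_⟩
    · ext i j
      by_cases h : i = j
      · subst h; simp [Matrix.sum_apply]
      · simp [Matrix.sum_apply, h]
    · simp only [trace_mul_diagonal_re, diagonal_apply_eq, mul_sum]
      rw [sum_comm]
      refine sum_congr rfl fun x _ => ?_
      simp [← hbest x, apply_ite Complex.re, ite_mul, mul_ite]
  · rintro y ⟨M, hM, hsum, rfl⟩
    have hcol : ∀ x, ∑ n, (M n x x).re = 1 := fun x => by
      simpa [Matrix.sum_apply, Complex.re_sum] using congrArg (fun A => (A x x).re) hsum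
    simp only [trace_mul_diagonal_re, mul_sum]
    rw [sum_comm]
    refine sum_le_sum fun x _ => ?_
    calc ∑ n, p n * ((M n x x).re * r n x) = ∑ n, (M n x x).re * (p n * r n x) := by
          congr 1; ext n; ring
      _ ≤ ∑ n, (M n x x).re * ⨆ n, p n * r n x := by
          gcongr with n
          · exact re_diag_nonneg_of_posSemidef (hM n) x
          · exact le_ciSup (f := fun n => p n * r n x) (Finite.bddAbove_range _) n
      _ = ⨆ n, p n * r n x := by rw [← sum_mul, hcol, one_mul]

end Helstrom

lemma exists_eq_single_of_isIdempotentElem_of_sum_eq_one {ι : Type*} [Fintype ι]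
    [DecidableEq ι] {e : ι → ℝ} (hidem : ∀ i, IsIdempotentElem (e i)) (hsum : ∑ i, e i = 1) :
    ∃ i0, e = Pi.single i0 1 := by
  have h01 : ∀ i, e i = 0 ∨ e i = 1 := fun i => IsIdempotentElem.iff_eq_zero_or_one.mp (hidem i)
  have hnonneg : ∀ i, 0 ≤ e i := fun i => by rcases h01 i with h | h <;> simp [h]
  obtain ⟨i0, -, hi0⟩ := exists_ne_zero_of_sum_ne_zero (hsum.trans_ne one_ne_zero)
  have he0 : e i0 = 1 := (h01 i0).resolve_left hi0
  have hrest : ∑ i ∈ univ.erase i0, e i = 0 := by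
    linarith [add_sum_erase univ e (mem_univ i0)]
  refine ⟨i0, funext fun i => ?_⟩
  by_cases h : i = i0
  · subst h; simpa using he0
  · rw [Pi.single_eq_of_ne h]
    exact (sum_eq_zero_iff_of_nonneg fun j _ => hnonneg j).mp hrest i
      (mem_erase.mpr ⟨h, mem_univ i⟩)

lemma exists_unitary_eq_conj_diagonal_single {ι : Type*} [Fintype ι] [DecidableEq ι]
    {φ : Matrix ι ι ℂ} (hherm : φ.IsHermitian) (hidem : IsIdempotentElem φ)
    (htr : φ.trace = 1) :
    ∃ U ∈ unitaryGroup ι ℂ, ∃ i0 : ι, φ = U * diagonal (Pi.single i0 1) * star U := by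
  set U := hherm.eigenvectorUnitary
  have hdiag_idem :
      IsIdempotentElem (diagonal (RCLike.ofReal ∘ hherm.eigenvalues : ι → ℂ)) := by
    rw [← hherm.conjStarAlgAut_star_eigenvectorUnitary]
    exact hidem.map _
  have hev_idem : ∀ i, IsIdempotentElem (hherm.eigenvalues i) := fun i => by
    have := congrFun (congrFun hdiag_idem i) i
    simp only [diagonal_mul_diagonal, diagonal_apply_eq, Function.comp_apply] at this
    exact_mod_cast this
  have hev_sum : ∑ i, hherm.eigenvalues i = 1 := by
    simpa [Complex.re_sum] using
      congrArg Complex.re (hherm.trace_eq_sum_eigenvalues.symm.trans htr)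
  obtain ⟨i0, hi0⟩ := exists_eq_single_of_isIdempotentElem_of_sum_eq_one hev_idem hev_sum
  refine ⟨U, U.2, i0, ?_⟩
  have hcoe : (RCLike.ofReal ∘ hherm.eigenvalues : ι → ℂ) = Pi.single i0 1 := by
    ext i
    by_cases h : i = i0
    · subst h; simp [hi0]
    · simp [hi0, Pi.single_eq_of_ne h]
  conv_lhs => rw [hherm.spectral_theorem, Unitary.conjStarAlgAut_apply, hcoe]

/-- The eigenvalues of the depolarized state `c • I/d + (1 - c) • φ` when the pure state `φ`
projects onto the `i0`-th basis vector. -/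
def depolarizedSpectrum {ι : Type*} [DecidableEq ι] (d : ℕ) (i0 : ι) (c : ℝ) (i : ι) : ℝ :=
  if i = i0 then 1 - (1 - 1 / d) * c else c / d

lemma depolarized_eq_conj_diagonal {ι : Type*} [Fintype ι] [DecidableEq ι] (d : ℕ)
    {U : Matrix ι ι ℂ} (hU : U ∈ unitaryGroup ι ℂ) (i0 : ι) (c : ℝ) :
    (c : ℂ) • ((1 / (d : ℂ)) • (1 : Matrix ι ι ℂ)) +
        ((1 - c : ℝ) : ℂ) • (U * diagonal (Pi.single i0 1) * star U) =
      U * diagonal (fun i => (depolarizedSpectrum d i0 c i : ℂ)) * star U := by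
  have hspec : diagonal (fun i => (depolarizedSpectrum d i0 c i : ℂ)) =
      (c : ℂ) • ((1 / (d : ℂ)) • (1 : Matrix ι ι ℂ)) +
        ((1 - c : ℝ) : ℂ) • diagonal (Pi.single i0 1) := by
    ext i j
    by_cases hij : i = j
    · subst hij
      simp only [depolarizedSpectrum, diagonal_apply_eq, Matrix.add_apply, Matrix.smul_apply,
        one_apply_eq, Pi.single_apply, smul_eq_mul]
      split_ifs <;> push_cast <;> ring
    · simp [hij]
  rw [hspec, Matrix.mul_add, Matrix.add_mul, Matrix.mul_smul, Matrix.mul_smul, Matrix.smul_mul,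
    Matrix.smul_mul, Matrix.mul_one, mem_unitaryGroup_iff.mp hU, Matrix.mul_smul, Matrix.smul_mul]

lemma tensorPow_eq_tensorFam {ι : Type*} (σ : Matrix ι ι ℂ) (u : ℕ) :
    tensorPow σ u = tensorFam fun _ => σ := rfl

lemma tensorPow_mem_unitaryGroup {ι : Type*} [Fintype ι] [DecidableEq ι] {U : Matrix ι ι ℂ}
    (hU : U ∈ unitaryGroup ι ℂ) (u : ℕ) : tensorPow U u ∈ unitaryGroup (Fin u → ι) ℂ :=
  tensorFam_mem_unitaryGroup fun _ => hU

lemma tensorPow_tensorFam_conj_diagonal {m : ℕ} {ι : Type*} [Fintype ι] [DecidableEq ι]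
    (U : Matrix ι ι ℂ) (g : Fin m → ι → ℝ) (u : ℕ) :
    tensorPow (tensorFam fun l => U * diagonal (fun i => (g l i : ℂ)) * star U) u =
      tensorPow (tensorFam fun _ => U) u *
        diagonal (fun j => ((∏ k, ∏ l, g l (j k l) : ℝ) : ℂ)) *
        star (tensorPow (tensorFam fun _ => U) u) := by
  simp only [tensorPow_eq_tensorFam, tensorFam_conj, tensorFam_diagonal, Complex.ofReal_prod]

/-- Probability of one fixed `u`-bit string with `k` ones under i.i.d. Bernoulli(`a`) bits. -/
def bernoulliProb (a : ℝ) (u k : ℕ) : ℝ := a ^ k * (1 - a) ^ (u - k)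

lemma bernoulliProb_nonneg {a : ℝ} (ha : a ∈ Set.Icc (0 : ℝ) 1) (u k : ℕ) :
    0 ≤ bernoulliProb a u k :=
  mul_nonneg (pow_nonneg ha.1 _) (pow_nonneg (sub_nonneg.mpr ha.2) _)

lemma bernoulliProb_mul_le_mul {a b : ℝ} (hb : 0 ≤ b) (hba : b ≤ a) (ha : a ≤ 1)
    {u k k' : ℕ} (hk : k ≤ k') (hk' : k' ≤ u) :
    bernoulliProb a u k * bernoulliProb b u k' ≤ bernoulliProb a u k' * bernoulliProb b u k := by
  obtain ⟨t, rfl⟩ := Nat.exists_eq_add_of_le hk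
  have hu : u - k = (u - (k + t)) + t := by omega
  have ha0 : 0 ≤ a := hb.trans hba
  have h1a : 0 ≤ 1 - a := by linarith
  have h1b : 0 ≤ 1 - b := by linarith
  set X := a ^ k * (1 - a) ^ (u - (k + t)) * b ^ k * (1 - b) ^ (u - (k + t)) with hX
  calc bernoulliProb a u k * bernoulliProb b u (k + t) = ((1 - a) * b) ^ t * X := by
        rw [bernoulliProb, bernoulliProb, hu, pow_add, pow_add, mul_pow, hX]; ring
    _ ≤ (a * (1 - b)) ^ t * X := by
        have hbase : (1 - a) * b ≤ a * (1 - b) := by linarith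
        exact mul_le_mul_of_nonneg_right (pow_le_pow_left₀ (mul_nonneg h1a hb) hbase t)
          (by rw [hX]; positivity)
    _ = bernoulliProb a u (k + t) * bernoulliProb b u k := by
        rw [bernoulliProb, bernoulliProb, hu, pow_add, pow_add, mul_pow, hX]; ring

section Likelihood

variable {κ : Type*} [Fintype κ] [DecidableEq κ]

/-- Probability of one fixed family of `u`-bit strings, the string of block `l` having Hamming
weight `w l`, when the bits of block `n` are Bernoulli(`a`) and all other bits Bernoulli(`b`). -/
def likelihood (a b : ℝ) (u : ℕ) (w : κ → ℕ) (n : κ) : ℝ :=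
  ∏ l, bernoulliProb (if l = n then a else b) u (w l)

lemma likelihood_eq_mul_prod_erase (a b : ℝ) (u : ℕ) (w : κ → ℕ) (n : κ) :
    likelihood a b u w n =
      bernoulliProb a u (w n) * ∏ l ∈ univ.erase n, bernoulliProb b u (w l) := by
  rw [likelihood, ← mul_prod_erase univ _ (mem_univ n), if_pos rfl]
  congr 1
  exact prod_congr rfl fun l hl => by rw [if_neg (ne_of_mem_erase hl)]

lemma likelihood_le_of_mul_le {a b : ℝ} (hb : b ∈ Set.Icc (0 : ℝ) 1) {u : ℕ} {w : κ → ℕ}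
    {n n' : κ} (h : bernoulliProb a u (w n) * bernoulliProb b u (w n') ≤
      bernoulliProb a u (w n') * bernoulliProb b u (w n)) :
    likelihood a b u w n ≤ likelihood a b u w n' := by
  by_cases hnn : n = n'
  · rw [hnn]
  set R := ∏ l ∈ (univ.erase n).erase n', bernoulliProb b u (w l)
  have hR : 0 ≤ R := prod_nonneg fun l _ => bernoulliProb_nonneg hb u (w l)
  have hn : likelihood a b u w n = bernoulliProb a u (w n) * bernoulliProb b u (w n') * R := by
    rw [likelihood_eq_mul_prod_erase,
      ← mul_prod_erase _ _ (mem_erase.mpr ⟨Ne.symm hnn, mem_univ _⟩), mul_assoc]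
  have hn' : likelihood a b u w n' = bernoulliProb a u (w n') * bernoulliProb b u (w n) * R := by
    rw [likelihood_eq_mul_prod_erase, ← mul_prod_erase _ _ (mem_erase.mpr ⟨hnn, mem_univ _⟩),
      erase_right_comm, mul_assoc]
  rw [hn, hn']
  exact mul_le_mul_of_nonneg_right h hR

lemma prod_erase_bernoulliProb (b : ℝ) {u : ℕ} {w : κ → ℕ} (hw : ∀ l, w l ≤ u) (n : κ) :
    ∏ l ∈ univ.erase n, bernoulliProb b u (w l) =
      b ^ (∑ l, w l - w n) * (1 - b) ^ ((Fintype.card κ - 1) * u - (∑ l, w l - w n)) := by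
  have hW : ∑ l ∈ univ.erase n, w l = ∑ l, w l - w n := by
    have := add_sum_erase univ w (mem_univ n)
    omega
  have hU : ∑ l ∈ univ.erase n, (u - w l) = (Fintype.card κ - 1) * u - (∑ l, w l - w n) := by
    rw [sum_tsub_distrib _ fun l _ => hw l, hW, sum_const, card_erase_of_mem (mem_univ n),
      card_univ, smul_eq_mul]
  simp only [bernoulliProb, prod_mul_distrib, prod_pow_eq_pow_sum, hW, hU]

lemma exists_likelihood_le [Nonempty κ] {a b : ℝ} (ha : a ∈ Set.Icc (0 : ℝ) 1)
    (hb : b ∈ Set.Icc (0 : ℝ) 1) {u : ℕ} {w : κ → ℕ} (hw : ∀ l, w l ≤ u) :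
    ∃ ns, w ns = (if b ≤ a then univ.sup w else sInf (Set.range w)) ∧
      ∀ n, likelihood a b u w n ≤ likelihood a b u w ns := by
  by_cases hba : b ≤ a
  · obtain ⟨ns, -, hns⟩ := exists_mem_eq_sup univ univ_nonempty w
    refine ⟨ns, by rw [if_pos hba, hns], fun n => likelihood_le_of_mul_le hb ?_⟩
    exact bernoulliProb_mul_le_mul hb.1 hba ha.2 (hns ▸ le_sup (mem_univ n)) (hw ns)
  · obtain ⟨ns, hns⟩ := Nat.sInf_mem (Set.range_nonempty w)
    refine ⟨ns, by rw [if_neg hba, hns], fun n => likelihood_le_of_mul_le hb ?_⟩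
    rw [mul_comm, mul_comm (bernoulliProb a u _)]
    exact bernoulliProb_mul_le_mul ha.1 (not_le.mp hba).le hb.2
      (hns ▸ Nat.sInf_le ⟨n, rfl⟩) (hw n)

end Likelihood

lemma hamming_le {u : ℕ} (x : Fin u → Bool) : hamming x ≤ u :=
  (card_filter_le _ _).trans_eq (card_fin u)

lemma hErr_eq_one_sub_sum_iSup_likelihood {m : ℕ} [NeZero m] (u : ℕ) {a b : ℝ}
    (ha : a ∈ Set.Icc (0 : ℝ) 1) (hb : b ∈ Set.Icc (0 : ℝ) 1) :
    hErr m u b a =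
      1 - 1 / (m : ℝ) *
        ∑ x : Fin m → Fin u → Bool, ⨆ n, likelihood a b u (fun l => hamming (x l)) n := by
  unfold hErr
  congr 2
  refine sum_congr rfl fun x _ => ?_
  obtain ⟨ns, hns, hle⟩ := exists_likelihood_le ha hb (fun l => hamming_le (x l))
  rw [le_antisymm (ciSup_le hle) (le_ciSup (Finite.bddAbove_range _) ns),
    likelihood_eq_mul_prod_erase, prod_erase_bernoulliProb _ (fun l => hamming_le (x l)), hns,
    Fintype.card_fin]
  rfl

lemma prod_ite_eq_pow_hamming {M : Type*} [CommMonoid M] {u : ℕ} (x : Fin u → Bool)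
    (s t : M) :
    ∏ k, (if x k then s else t) = s ^ hamming x * t ^ (u - hamming x) := by
  have hcard := card_filter_add_card_filter_not (s := univ) fun k => x k = true
  rw [card_univ, Fintype.card_fin] at hcard
  rw [prod_ite, prod_const, prod_const, hamming]
  congr 2
  omega

lemma prod_depolarizedSpectrum {d u : ℕ} (i0 : Fin d) (c : ℝ) (f : Fin u → Fin d) :
    ∏ k, depolarizedSpectrum d i0 c (f k) =
      (c / d) ^ hamming (fun k => decide (f k ≠ i0)) *
        (1 - (1 - 1 / d) * c) ^ (u - hamming (fun k => decide (f k ≠ i0))) := by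
  rw [← prod_ite_eq_pow_hamming]
  refine prod_congr rfl fun k _ => ?_
  by_cases h : f k = i0 <;> simp [depolarizedSpectrum, h]

lemma card_filter_comp_eq_prod {γ α β : Type*} [Fintype γ] [DecidableEq γ] [Fintype α]
    [DecidableEq β] (π : α → β) (x : γ → β) :
    #{f : γ → α | (fun i => π (f i)) = x} = ∏ i, #{a | π a = x i} := by
  rw [← Fintype.card_piFinset]
  congr 1
  ext f
  simp [funext_iff, Fintype.mem_piFinset]

lemma card_decide_ne_eq {d : ℕ} (i0 : Fin d) (t : Bool) :
    #{i | decide (i ≠ i0) = t} = if t then d - 1 else 1 := by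
  cases t
  · simp [filter_eq']
  · simp [filter_ne', card_erase_of_mem]

/-- Grouping the basis vectors `j` by the pattern of coordinates different from `i0`: a pattern
with `w` such coordinates in a block occurs `(d - 1) ^ w` times, which turns the weight `c / d`
of each of them into the Bernoulli parameter `(1 - 1/d) c`. -/
lemma sum_iSup_prod_depolarizedSpectrum {d m u : ℕ} (i0 : Fin d) (c : Fin m → Fin m → ℝ) :
    ∑ j : Fin u → Fin m → Fin d, ⨆ n, ∏ k, ∏ l, depolarizedSpectrum d i0 (c n l) (j k l) =
      ∑ x : Fin m → Fin u → Bool,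
        ⨆ n, ∏ l, bernoulliProb ((1 - 1 / d) * c n l) u (hamming (x l)) := by
  have hd : (d : ℝ) ≠ 0 := Nat.cast_ne_zero.mpr (Fin.pos i0).ne'
  set pattern : (Fin m → Fin u → Fin d) → Fin m → Fin u → Bool :=
    fun j l k => decide (j l k ≠ i0)
  set G : (Fin m → Fin u → Bool) → ℝ := fun x => ⨆ n, ∏ l,
    (c n l / d) ^ hamming (x l) * (1 - (1 - 1 / d) * c n l) ^ (u - hamming (x l))
  have hfiber : ∀ x, (#{j | pattern j = x} : ℝ) = ∏ l, ((d : ℝ) - 1) ^ hamming (x l) := by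
    intro x
    rw [show #{j | pattern j = x} = _ from
      card_filter_comp_eq_prod (fun (f : Fin u → Fin d) k => decide (f k ≠ i0)) x]
    push_cast
    refine prod_congr rfl fun l _ => ?_
    rw [show #{f : Fin u → Fin d | (fun k => decide (f k ≠ i0)) = x l} = _ from
      card_filter_comp_eq_prod (fun i => decide (i ≠ i0)) (x l)]
    simp only [card_decide_ne_eq, prod_ite_eq_pow_hamming, one_pow, mul_one]
    push_cast [Nat.cast_pred (Fin.pos i0)]
    rfl
  calc ∑ j : Fin u → Fin m → Fin d, ⨆ n, ∏ k, ∏ l, depolarizedSpectrum d i0 (c n l) (j k l)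
      = ∑ j, G (pattern j) := by
        rw [← (Equiv.piComm fun (_ : Fin m) (_ : Fin u) => Fin d).sum_comp]
        refine sum_congr rfl fun j _ => ?_
        simp only [Equiv.piComm_apply, Function.swap, G, pattern]
        congr 1; ext n
        rw [prod_comm]
        exact prod_congr rfl fun l _ => prod_depolarizedSpectrum i0 (c n l) (j l)
    _ = ∑ x, (#{j | pattern j = x} : ℝ) * G x := by
        rw [← sum_fiberwise' univ pattern G]
        simp only [sum_const, nsmul_eq_mul]
    _ = _ := by
        refine sum_congr rfl fun x _ => ?_
        rw [hfiber, Real.mul_iSup_of_nonneg (prod_nonneg fun l _ => ?_)]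
        · congr 1; ext n
          rw [← prod_mul_distrib]
          refine prod_congr rfl fun l _ => ?_
          rw [bernoulliProb, ← mul_assoc, ← mul_pow]
          congr 2
          field_simp
        · exact pow_nonneg (sub_nonneg.mpr (Nat.one_le_cast.mpr (Fin.pos i0))) _

lemma one_sub_one_div_mul_mem_Icc {d : ℕ} (hd : d ≠ 0) {q : ℝ} (hq : q ∈ Set.Icc (0 : ℝ) 1) :
    (1 - 1 / (d : ℝ)) * q ∈ Set.Icc (0 : ℝ) 1 := by
  have hd' : (1 : ℝ) ≤ d := Nat.one_le_cast.mpr (Nat.one_le_iff_ne_zero.mpr hd)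
  have h0 : 0 ≤ 1 - 1 / (d : ℝ) := sub_nonneg.mpr ((div_le_one (by linarith)).mpr hd')
  have h1 : 1 - 1 / (d : ℝ) ≤ 1 := sub_le_self _ (by positivity)
  exact ⟨mul_nonneg h0 hq.1, mul_le_one₀ h1 hq.1 hq.2⟩

theorem helstrom_CPF_depolarizing_unentangled_general (d : ℕ)
    (φ : Matrix (Fin d) (Fin d) ℂ)
    (hherm : φᴴ = φ) (hproj : φ * φ = φ) (htr : φ.trace = 1)
    (m : ℕ) (hm : 2 ≤ m) (qB qT : ℝ)
    (hB : qB ∈ Set.Icc (0:ℝ) 1) (hT : qT ∈ Set.Icc (0:ℝ) 1)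
    (u : ℕ) :
    helstrom (fun n : Fin m => tensorPow (tensorFam (fun k =>
        if k = n then
          (qT:ℂ) • ((1/(d:ℂ)) • (1 : Matrix (Fin d) (Fin d) ℂ)) + (((1-qT : ℝ)):ℂ) • φ
        else
          (qB:ℂ) • ((1/(d:ℂ)) • (1 : Matrix (Fin d) (Fin d) ℂ)) + (((1-qB : ℝ)):ℂ) • φ)) u)
      (fun _ => 1/(m:ℝ))
      = hErr m u ((1 - 1/(d:ℝ)) * qB) ((1 - 1/(d:ℝ)) * qT) := by
  have : NeZero m := ⟨by omega⟩
  obtain ⟨U, hU, i0, rfl⟩ := exists_unitary_eq_conj_diagonal_single hherm hproj htr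
  have hd : d ≠ 0 := (Fin.pos i0).ne'
  set r : Fin m → (Fin u → Fin m → Fin d) → ℝ := fun n j =>
    ∏ k, ∏ l, depolarizedSpectrum d i0 (if l = n then qT else qB) (j k l)
  set V := tensorPow (tensorFam fun _ : Fin m => U) u
  calc _ = helstrom (fun n => V * diagonal (fun j => (r n j : ℂ)) * star V) (fun _ => 1 / m) := by
        congr 1; ext1 n
        rw [← tensorPow_tensorFam_conj_diagonal U
          (fun l => depolarizedSpectrum d i0 (if l = n then qT else qB))]
        congr 2; ext1 l
        split_ifs <;> exact depolarized_eq_conj_diagonal d hU i0 _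
    _ = 1 - 1 / m * ∑ j, ⨆ n, r n j := by
        rw [helstrom_unitary_conj (tensorPow_mem_unitaryGroup
          (tensorFam_mem_unitaryGroup fun _ => hU) u), helstrom_diagonal]
        simp_rw [← Real.mul_iSup_of_nonneg (by positivity : (0 : ℝ) ≤ 1 / m), ← mul_sum]
    _ = _ := by
        rw [sum_iSup_prod_depolarizedSpectrum, hErr_eq_one_sub_sum_iSup_likelihood u
          (one_sub_one_div_mul_mem_Icc hd hT) (one_sub_one_div_mul_mem_Icc hd hB)]
        simp_rw [likelihood, mul_ite]

/-- Helstrom limit for channel position finding with depolarizing channels and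
pure unentangled inputs. -/
theorem helstrom_CPF_depolarizing_unentangled (d : ℕ) (hd : 2 ≤ d)
    (φ : Matrix (Fin d) (Fin d) ℂ)
    (hherm : φᴴ = φ) (hproj : φ * φ = φ) (htr : φ.trace = 1)
    (m : ℕ) (hm : 2 ≤ m) (qB qT : ℝ)
    (hB : qB ∈ Set.Icc (0:ℝ) 1) (hT : qT ∈ Set.Icc (0:ℝ) 1)
    (u : ℕ) (hu : 1 ≤ u) :
    helstrom (fun n : Fin m => tensorPow (tensorFam (fun k =>
        if k = n then
          (qT:ℂ) • ((1/(d:ℂ)) • (1 : Matrix (Fin d) (Fin d) ℂ)) + (((1-qT : ℝ)):ℂ) • φ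
        else
          (qB:ℂ) • ((1/(d:ℂ)) • (1 : Matrix (Fin d) (Fin d) ℂ)) + (((1-qB : ℝ)):ℂ) • φ)) u)
      (fun _ => 1/(m:ℝ))
      = hErr m u ((1 - 1/(d:ℝ)) * qB) ((1 - 1/(d:ℝ)) * qT) :=
  helstrom_CPF_depolarizing_unentangled_general d φ hherm hproj htr m hm qB qT hB hT u
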